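/- For every p ≥ 1, the Cramér transform of the p-measure ν_p satisfies Λ_{ν_p}*(x)/x^p → 1 as x → +∞. -/

import Mathlib

open MeasureTheory Filter Set Real Topology

noncomputable def nup (p : ℝ) : Measure ℝ :=
  volume.withDensity fun x =>
    ENNReal.ofReal ((2 * Real.Gamma (1 + 1 / p))⁻¹ * exp (-(|x| ^ p)))

noncomputable def LambdaP (p t : ℝ) : ℝ := log (∫ s, exp (t * s) ∂(nup p))

noncomputable def LambdaPStar (p x : ℝ) : ℝ :=
  ⨆ t : {t : ℝ // Integrable (fun s => exp (t * s)) (nup p)},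
    ((t : ℝ) * x - LambdaP p t)

namespace Stmt18

noncomputable def Zc (p : ℝ) : ℝ := 2 * Real.Gamma (1 + 1 / p)
noncomputable def g (p : ℝ) (x : ℝ) : ℝ := (Zc p)⁻¹ * exp (-(|x| ^ p))

lemma Zc_pos {p : ℝ} (hp : 1 ≤ p) : 0 < Zc p := by
  have h1 : 0 < 1 + 1 / p := by positivity
  have := Real.Gamma_pos_of_pos h1
  unfold Zc; positivity

lemma g_pos {p : ℝ} (hp : 1 ≤ p) (x : ℝ) : 0 < g p x := by
  have := Zc_pos hp
  unfold g; positivity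

lemma g_meas (p : ℝ) : Measurable (g p) := by
  unfold g; fun_prop

lemma nup_eq (p : ℝ) :
    nup p = volume.withDensity fun x => (Real.toNNReal (g p x) : ENNReal) := rfl

lemma integral_nup {p : ℝ} (hp : 1 ≤ p) (f : ℝ → ℝ) :
    ∫ s, f s ∂(nup p) = ∫ s, g p s * f s := by
  rw [nup_eq, integral_withDensity_eq_integral_smul (g_meas p).real_toNNReal]
  refine integral_congr_ae (Eventually.of_forall fun s => ?_)
  simp [NNReal.smul_def, Real.coe_toNNReal _ (g_pos hp s).le]

lemma integrable_nup_iff {p : ℝ} (hp : 1 ≤ p) (f : ℝ → ℝ) :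
    Integrable f (nup p) ↔ Integrable (fun s => g p s * f s) volume := by
  rw [nup_eq, integrable_withDensity_iff_integrable_smul (g_meas p).real_toNNReal]
  refine integrable_congr (Eventually.of_forall fun s => ?_)
  simp [NNReal.smul_def, Real.coe_toNNReal _ (g_pos hp s).le]

lemma integrable_exp_neg_abs_rpow {p b : ℝ} (hp : 1 ≤ p) (hb : 0 < b) :
    Integrable (fun x : ℝ => exp (-(b * |x| ^ p))) := by
  have h1 : IntegrableOn (fun x : ℝ => exp (-(b * |x| ^ p))) (Ioi 0) := by
    refine (integrableOn_rpow_mul_exp_neg_mul_rpow (p := p) (s := 0) (by norm_num) (by linarith) hb).congr_fun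
      (fun x hx => ?_) measurableSet_Ioi
    dsimp only; rw [Real.rpow_zero, one_mul, abs_of_pos (mem_Ioi.mp hx), neg_mul]
  have h2 : IntegrableOn (fun x : ℝ => exp (-(b * |x| ^ p))) (Iic 0) := by
    rw [← Measure.map_neg_eq_self (volume : Measure ℝ)]
    have m : MeasurableEmbedding fun x : ℝ => -x := (Homeomorph.neg ℝ).measurableEmbedding
    rw [m.integrableOn_map_iff]
    simp_rw [Function.comp_def, abs_neg, neg_preimage, neg_Iic, neg_zero]
    exact Iff.mpr integrableOn_Ici_iff_integrableOn_Ioi h1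
  have := h2.union h1
  rwa [Iic_union_Ioi, integrableOn_univ] at this


lemma rpow_sub_one_mul {x p : ℝ} (hx : 0 < x) : x ^ (p - 1) * x = x ^ p := by
  have h := (Real.rpow_add_one hx.ne' (p - 1)).symm
  rwa [sub_add_cancel] at h

lemma tangent_ineq {p : ℝ} (hp : 1 ≤ p) {x s : ℝ} (hx : 0 < x) (hs : 0 ≤ s) :
    p * x ^ (p - 1) * (s - x) ≤ s ^ p - x ^ p := by
  have hA : (0:ℝ) < x ^ p := Real.rpow_pos_of_pos hx p
  have hC : (0:ℝ) < x ^ (p - 1) := Real.rpow_pos_of_pos hx _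
  have hCx : x ^ (p - 1) * x = x ^ p := rpow_sub_one_mul hx
  have hsx : (0:ℝ) ≤ s / x := by positivity
  have hb := one_add_mul_self_le_rpow_one_add (s := s / x - 1) (by linarith) hp
  have h1 : 1 + (s / x - 1) = s / x := by ring
  rw [h1, Real.div_rpow hs hx.le] at hb
  have h2 := mul_le_mul_of_nonneg_right hb hA.le
  rw [div_mul_cancel₀ _ hA.ne'] at h2
  have h3 : (1 + p * (s / x - 1)) * x ^ p = x ^ p + p * x ^ (p - 1) * (s - x) := by
    rw [← hCx]; field_simp
  linarith

lemma young {p θ x : ℝ} (hp : 1 ≤ p) (hθ0 : 0 < θ) (hθ1 : θ ≤ 1) (hx : 1 ≤ x) (s : ℝ) :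
    θ * (p * x ^ (p - 1)) * s - θ * |s| ^ p ≤ θ * (p * x ^ (p - 1)) * x - θ * x ^ p := by
  have hx0 : 0 < x := lt_of_lt_of_le one_pos hx
  have hCx : x ^ (p - 1) * x = x ^ p := rpow_sub_one_mul hx0
  have hC : (0:ℝ) < x ^ (p - 1) := Real.rpow_pos_of_pos hx0 _
  have hA : (0:ℝ) < x ^ p := Real.rpow_pos_of_pos hx0 p
  rcases le_or_gt 0 s with hs | hs
  · rw [abs_of_nonneg hs]
    have h := tangent_ineq hp hx0 hs
    nlinarith
  · have hcoef : (0:ℝ) < θ * (p * x ^ (p - 1)) := by positivity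
    have h1 : θ * (p * x ^ (p - 1)) * s ≤ 0 :=
      mul_nonpos_of_nonneg_of_nonpos hcoef.le hs.le
    have h2 : (0:ℝ) ≤ θ * |s| ^ p := by
      have := Real.rpow_nonneg (abs_nonneg s) p; positivity
    have h3 : θ * (p * x ^ (p - 1)) * x - θ * x ^ p = θ * x ^ p * (p - 1) := by
      rw [← hCx]; ring
    have h4 : (0:ℝ) ≤ θ * x ^ p * (p - 1) :=
      mul_nonneg (mul_nonneg hθ0.le hA.le) (by linarith)
    linarith

lemma density_le {p : ℝ} (hp : 1 ≤ p) (x : ℝ) : g p x ≤ (Zc p)⁻¹ := by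
  have hZ := Zc_pos hp
  have h1 : exp (-(|x| ^ p)) ≤ 1 := by
    rw [exp_le_one_iff]
    simp [Real.rpow_nonneg (abs_nonneg x) p]
  calc g p x = (Zc p)⁻¹ * exp (-(|x| ^ p)) := rfl
    _ ≤ (Zc p)⁻¹ * 1 := by
        exact mul_le_mul_of_nonneg_left h1 (by positivity)
    _ = (Zc p)⁻¹ := mul_one _

lemma nup_Icc_ne_top {p : ℝ} (hp : 1 ≤ p) (a : ℝ) : nup p (Icc a (a + 1)) ≠ ⊤ := by
  have hmeas : MeasurableSet (Icc a (a + 1)) := measurableSet_Icc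
  have h1 : nup p (Icc a (a + 1)) ≤ ENNReal.ofReal ((Zc p)⁻¹) * volume (Icc a (a + 1)) := by
    rw [show nup p = volume.withDensity fun x => ENNReal.ofReal (g p x) from rfl,
      withDensity_apply _ hmeas]
    calc ∫⁻ x in Icc a (a + 1), ENNReal.ofReal (g p x)
        ≤ ∫⁻ _ in Icc a (a + 1), ENNReal.ofReal ((Zc p)⁻¹) :=
          lintegral_mono fun x => ENNReal.ofReal_le_ofReal (density_le hp x)
      _ = ENNReal.ofReal ((Zc p)⁻¹) * volume (Icc a (a + 1)) := by
          rw [setLIntegral_const]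
  refine ne_top_of_le_ne_top ?_ h1
  simp [Real.volume_Icc]

lemma nup_Icc_ge {p : ℝ} (hp : 1 ≤ p) {a : ℝ} (ha : 0 ≤ a) :
    (Zc p)⁻¹ * exp (-((a + 1) ^ p)) ≤ (nup p (Icc a (a + 1))).toReal := by
  have hmeas : MeasurableSet (Icc a (a + 1)) := measurableSet_Icc
  have hlow : ∀ x ∈ Icc a (a + 1), (Zc p)⁻¹ * exp (-((a + 1) ^ p)) ≤ g p x := by
    intro x hx
    have hx0 : 0 ≤ x := le_trans ha hx.1
    have h1 : |x| ^ p ≤ (a + 1) ^ p := by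
      rw [abs_of_nonneg hx0]
      exact Real.rpow_le_rpow hx0 hx.2 (by linarith)
    have := Zc_pos hp
    exact mul_le_mul_of_nonneg_left (by simpa using exp_le_exp.mpr (by linarith))
      (by positivity)
  have h2 : ENNReal.ofReal ((Zc p)⁻¹ * exp (-((a + 1) ^ p))) ≤ nup p (Icc a (a + 1)) := by
    rw [show nup p = volume.withDensity fun x => ENNReal.ofReal (g p x) from rfl,
      withDensity_apply _ hmeas]
    calc ENNReal.ofReal ((Zc p)⁻¹ * exp (-((a + 1) ^ p)))
        = ENNReal.ofReal ((Zc p)⁻¹ * exp (-((a + 1) ^ p))) * volume (Icc a (a + 1)) := by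
          simp [Real.volume_Icc]
      _ = ∫⁻ _ in Icc a (a + 1), ENNReal.ofReal ((Zc p)⁻¹ * exp (-((a + 1) ^ p))) := by
          rw [setLIntegral_const]
      _ ≤ ∫⁻ x in Icc a (a + 1), ENNReal.ofReal (g p x) := by
          refine setLIntegral_mono ((g_meas p).ennreal_ofReal) fun x hx => ENNReal.ofReal_le_ofReal (hlow x hx)
  exact (ENNReal.ofReal_le_iff_le_toReal (nup_Icc_ne_top hp a)).mp h2

lemma lambda_lower_on_box {p t : ℝ} (hp : 1 ≤ p)
    (ht : Integrable (fun s => exp (t * s)) (nup p)) {a c : ℝ} (ha : 0 ≤ a)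
    (hc : ∀ s ∈ Icc a (a + 1), c ≤ exp (t * s)) (hc0 : 0 < c) :
    log (c * ((Zc p)⁻¹ * exp (-((a + 1) ^ p)))) ≤ LambdaP p t := by
  have hZ := Zc_pos hp
  have h1 : c * (nup p (Icc a (a + 1))).toReal ≤ ∫ s in Icc a (a + 1), exp (t * s) ∂(nup p) :=
    setIntegral_ge_of_const_le_real measurableSet_Icc (nup_Icc_ne_top hp a) hc ht.integrableOn
  have h2 : ∫ s in Icc a (a + 1), exp (t * s) ∂(nup p) ≤ ∫ s, exp (t * s) ∂(nup p) :=
    setIntegral_le_integral ht (Eventually.of_forall fun s => (exp_pos _).le)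
  have h3 : c * ((Zc p)⁻¹ * exp (-((a + 1) ^ p))) ≤ ∫ s, exp (t * s) ∂(nup p) := by
    have := mul_le_mul_of_nonneg_left (nup_Icc_ge hp ha) hc0.le
    linarith
  exact Real.log_le_log (by positivity) h3

lemma integrable_zero_nup {p : ℝ} (hp : 1 ≤ p) :
    Integrable (fun s : ℝ => exp ((0:ℝ) * s)) (nup p) := by
  rw [integrable_nup_iff hp]
  have h := (integrable_exp_neg_abs_rpow hp one_pos).const_mul (Zc p)⁻¹
  refine h.congr (Eventually.of_forall fun s => ?_)
  simp [g]

lemma sup_term_le {p x : ℝ} (hp : 1 ≤ p) (hx : 1 ≤ x) {t : ℝ}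
    (ht : Integrable (fun s => exp (t * s)) (nup p)) :
    t * x - LambdaP p t ≤ (x + 1) ^ p + log (Zc p) := by
  have hZ := Zc_pos hp
  rcases le_or_gt 0 t with htpos | htneg
  · have h := lambda_lower_on_box hp ht (a := x) (c := exp (t * x)) (by linarith)
      (fun s hs => exp_le_exp.mpr (mul_le_mul_of_nonneg_left hs.1 htpos)) (exp_pos _)
    rw [log_mul (exp_pos _).ne' (by positivity), log_exp,
      log_mul (by positivity) (exp_pos _).ne', log_exp, log_inv] at h
    linarith
  · have h := lambda_lower_on_box hp ht (a := 0) (c := exp (t * (0 + 1))) le_rfl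
      (fun s hs => exp_le_exp.mpr (mul_le_mul_of_nonpos_left hs.2 htneg.le)) (exp_pos _)
    rw [log_mul (exp_pos _).ne' (by positivity), log_exp,
      log_mul (by positivity) (exp_pos _).ne', log_exp, log_inv] at h
    have h1 : ((0:ℝ) + 1) ^ p = 1 := by rw [zero_add, Real.one_rpow]
    have h2 : (1:ℝ) ≤ (x + 1) ^ p := by
      calc (1:ℝ) = 1 ^ p := (Real.one_rpow p).symm
        _ ≤ (x + 1) ^ p := Real.rpow_le_rpow zero_le_one (by linarith) (by linarith)
    have h3 : t * (x - 1) ≤ 0 :=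
      mul_nonpos_of_nonpos_of_nonneg htneg.le (by linarith)
    rw [h1] at h
    nlinarith

lemma bddAbove_index {p x : ℝ} (hp : 1 ≤ p) (hx : 1 ≤ x) :
    BddAbove (range fun t : {t : ℝ // Integrable (fun s => exp (t * s)) (nup p)} =>
      (t : ℝ) * x - LambdaP p t) :=
  ⟨(x + 1) ^ p + log (Zc p), by rintro y ⟨t, rfl⟩; exact sup_term_le hp hx t.2⟩

lemma lambdaStar_le {p x : ℝ} (hp : 1 ≤ p) (hx : 1 ≤ x) :
    LambdaPStar p x ≤ (x + 1) ^ p + log (Zc p) := by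
  have : Nonempty {t : ℝ // Integrable (fun s => exp (t * s)) (nup p)} :=
    ⟨⟨0, integrable_zero_nup hp⟩⟩
  exact ciSup_le fun t => sup_term_le hp hx t.2

lemma lambdaStar_ge {p θ : ℝ} (hp : 1 ≤ p) (hθ0 : 0 < θ) (hθ1 : θ < 1) :
    ∃ K : ℝ, ∀ x : ℝ, 1 ≤ x → θ * x ^ p - K ≤ LambdaPStar p x := by
  have hZ := Zc_pos hp
  set b := 1 - θ with hb
  have hb0 : 0 < b := by rw [hb]; linarith
  have hI : Integrable (fun s : ℝ => exp (-(b * |s| ^ p))) := integrable_exp_neg_abs_rpow hp hb0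
  set I := ∫ s : ℝ, exp (-(b * |s| ^ p)) with hIdef
  have hIpos : 0 < I := by
    rw [hIdef]
    rw [integral_pos_iff_support_of_nonneg (fun s => (exp_pos _).le) hI]
    have hsupp : Function.support (fun s : ℝ => exp (-(b * |s| ^ p))) = univ := by
      ext s; simp [Function.support, (exp_pos _).ne']
    rw [hsupp]
    simp
  refine ⟨log ((Zc p)⁻¹ * I), fun x hx => ?_⟩
  have hx0 : 0 < x := lt_of_lt_of_le one_pos hx
  set t := θ * (p * x ^ (p - 1)) with htdef
  have hpt : ∀ s : ℝ, g p s * exp (t * s) ≤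
      exp (t * x - θ * x ^ p) * ((Zc p)⁻¹ * exp (-(b * |s| ^ p))) := by
    intro s
    have hy := young hp hθ0 hθ1.le hx s
    have h1 : g p s * exp (t * s) = (Zc p)⁻¹ * exp (t * s - |s| ^ p) := by
      rw [show g p s = (Zc p)⁻¹ * exp (-(|s| ^ p)) from rfl, mul_assoc, ← exp_add]
      ring_nf
    rw [h1]
    have h2 : t * s - |s| ^ p ≤ (t * x - θ * x ^ p) + (-(b * |s| ^ p)) := by
      rw [← htdef] at hy
      simp only [hb]
      linarith
    calc (Zc p)⁻¹ * exp (t * s - |s| ^ p)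
        ≤ (Zc p)⁻¹ * exp ((t * x - θ * x ^ p) + (-(b * |s| ^ p))) :=
          mul_le_mul_of_nonneg_left (exp_le_exp.mpr h2) (by positivity)
      _ = exp (t * x - θ * x ^ p) * ((Zc p)⁻¹ * exp (-(b * |s| ^ p))) := by
          rw [exp_add]; ring
  have hmaj : Integrable (fun s : ℝ =>
      exp (t * x - θ * x ^ p) * ((Zc p)⁻¹ * exp (-(b * |s| ^ p)))) :=
    (hI.const_mul _).const_mul _
  have hti : Integrable (fun s => g p s * exp (t * s)) volume := by
    refine hmaj.mono' ?_ (Eventually.of_forall fun s => ?_)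
    · exact ((g_meas p).mul (by fun_prop)).aestronglyMeasurable
    · rw [Real.norm_eq_abs, abs_of_nonneg (mul_nonneg (g_pos hp s).le (exp_pos _).le)]
      exact hpt s
  have ht : Integrable (fun s => exp (t * s)) (nup p) := (integrable_nup_iff hp _).mpr hti
  have hle : ∫ s, exp (t * s) ∂(nup p) ≤ exp (t * x - θ * x ^ p) * ((Zc p)⁻¹ * I) := by
    rw [integral_nup hp]
    calc ∫ s, g p s * exp (t * s)
        ≤ ∫ s, exp (t * x - θ * x ^ p) * ((Zc p)⁻¹ * exp (-(b * |s| ^ p))) :=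
          integral_mono hti hmaj hpt
      _ = exp (t * x - θ * x ^ p) * ((Zc p)⁻¹ * I) := by
          rw [integral_const_mul, integral_const_mul]
  have hpos : 0 < ∫ s, exp (t * s) ∂(nup p) := by
    rw [integral_nup hp]
    rw [integral_pos_iff_support_of_nonneg
      (fun s => mul_nonneg (g_pos hp s).le (exp_pos _).le) hti]
    have hsupp : Function.support (fun s : ℝ => g p s * exp (t * s)) = univ := by
      ext s; simp [Function.support, (g_pos hp s).ne', (exp_pos _).ne']
    rw [hsupp]
    simp
  have hΛ : LambdaP p t ≤ (t * x - θ * x ^ p) + log ((Zc p)⁻¹ * I) := by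
    have h := Real.log_le_log hpos hle
    rwa [log_mul (exp_pos _).ne' (by positivity), log_exp] at h
  calc θ * x ^ p - log ((Zc p)⁻¹ * I) ≤ t * x - LambdaP p t := by linarith
    _ ≤ LambdaPStar p x := le_ciSup (bddAbove_index hp hx) ⟨t, ht⟩

end Stmt18

theorem stmt18 (p : ℝ) (hp : 1 ≤ p) :
    Tendsto (fun x : ℝ => LambdaPStar p x / x ^ p) atTop (𝓝 1) := by
  have hZ := Stmt18.Zc_pos hp
  have hp0 : 0 < p := lt_of_lt_of_le one_pos hp
  rw [tendsto_order]
  constructor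
  · intro a ha
    set θ := (max a 0 + 1) / 2 with hθdef
    have hm0 : 0 ≤ max a 0 := le_max_right a 0
    have hm1 : max a 0 < 1 := max_lt ha one_pos
    have hθ0 : 0 < θ := by rw [hθdef]; linarith
    have hθ1 : θ < 1 := by rw [hθdef]; linarith
    have hθa : a < θ := by
      have := le_max_left a 0
      rw [hθdef]; linarith
    obtain ⟨K, hK⟩ := Stmt18.lambdaStar_ge hp hθ0 hθ1
    have h1 : Tendsto (fun x : ℝ => K / x ^ p) atTop (𝓝 0) :=
      Tendsto.div_atTop tendsto_const_nhds (tendsto_rpow_atTop hp0)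
    have h2 : ∀ᶠ x : ℝ in atTop, K / x ^ p < θ - a :=
      h1.eventually (eventually_lt_nhds (by linarith))
    filter_upwards [h2, eventually_ge_atTop (1:ℝ)] with x hx2 hx1
    have hx0 : 0 < x := lt_of_lt_of_le one_pos hx1
    have hxp : 0 < x ^ p := Real.rpow_pos_of_pos hx0 p
    have h3 : θ - K / x ^ p ≤ LambdaPStar p x / x ^ p := by
      have h4 : (θ * x ^ p - K) / x ^ p = θ - K / x ^ p := by field_simp
      rw [← h4]
      exact (div_le_div_iff_of_pos_right hxp).mpr (hK x hx1)
    linarith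
  · intro c hc
    have hA : Tendsto (fun x : ℝ => (x + 1) / x) atTop (𝓝 1) := by
      have h : Tendsto (fun x : ℝ => 1 + x⁻¹) atTop (𝓝 (1 + 0)) :=
        tendsto_const_nhds.add tendsto_inv_atTop_zero
      rw [add_zero] at h
      refine h.congr' ?_
      filter_upwards [eventually_gt_atTop (0:ℝ)] with x hx
      field_simp
    have hA2 : Tendsto (fun x : ℝ => ((x + 1) / x) ^ p) atTop (𝓝 1) := by
      have hcont := (Real.continuousAt_rpow_const 1 p (Or.inl one_ne_zero)).tendsto.comp hA
      simpa [Function.comp_def] using hcont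
    have hB : Tendsto (fun x : ℝ => log (Stmt18.Zc p) / x ^ p) atTop (𝓝 0) :=
      Tendsto.div_atTop tendsto_const_nhds (tendsto_rpow_atTop hp0)
    have hU : Tendsto (fun x : ℝ => ((x + 1) / x) ^ p + log (Stmt18.Zc p) / x ^ p)
        atTop (𝓝 1) := by
      simpa using hA2.add hB
    have h2 := hU.eventually (eventually_lt_nhds hc)
    filter_upwards [h2, eventually_ge_atTop (1:ℝ)] with x hx2 hx1
    have hx0 : 0 < x := lt_of_lt_of_le one_pos hx1
    have hxp : 0 < x ^ p := Real.rpow_pos_of_pos hx0 p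
    have h3 : LambdaPStar p x / x ^ p ≤ ((x + 1) / x) ^ p + log (Stmt18.Zc p) / x ^ p := by
      have h4 := Stmt18.lambdaStar_le hp hx1
      have h5 : ((x + 1) / x) ^ p = (x + 1) ^ p / x ^ p := Real.div_rpow (by linarith : (0:ℝ) ≤ x + 1) hx0.le p
      rw [h5, ← add_div]
      exact (div_le_div_iff_of_pos_right hxp).mpr h4
    linarith
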